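/- Fix real numbers t_1, …, t_n not all equal, and let p(λ)_i = exp(λ t_i)/Σ_j exp(λ t_j). Then the entropy H(p(λ)) is a strictly decreasing function of λ on (0, ∞), and H(p(λ)) → log k as λ → ∞, where k is the number of indices attaining max_i t_i. -/

import Mathlib

/-!
With `Z λ = ∑ i, exp (λ t i)`, the entropy of the softmax distribution `p λ` is
`log Z λ - λ Z' λ / Z λ`, whose derivative is `-λ` times the variance of `t` under `p λ`; this
variance is positive because `t` is not constant. As `λ → ∞`, `p λ` (which does not change when
`t` is shifted by `max t`) converges to the uniform distribution on the `k` maximisers, whose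
entropy is `log k`, and entropy is continuous.
-/

open Real Finset Filter Topology

section

variable {ι : Type*} [Fintype ι]

noncomputable def shannonEntropy (p : ι → ℝ) : ℝ := -∑ i, p i * log (p i)

lemma continuous_shannonEntropy : Continuous (shannonEntropy : (ι → ℝ) → ℝ) :=
  (continuous_finsetSum _ fun i _ => (continuous_apply i).mul_log).neg

noncomputable def uniformWeights [DecidableEq ι] (s : Finset ι) (i : ι) : ℝ :=
  if i ∈ s then (s.card : ℝ)⁻¹ else 0

lemma shannonEntropy_uniformWeights [DecidableEq ι] (s : Finset ι) :
    shannonEntropy (uniformWeights s) = log s.card := by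
  have hterm : ∀ i, uniformWeights s i * log (uniformWeights s i)
      = if i ∈ s then -((s.card : ℝ)⁻¹ * log s.card) else 0 := fun i => by
    unfold uniformWeights
    split_ifs <;> simp [log_inv]
  simp only [shannonEntropy, hterm, sum_ite_mem, univ_inter, sum_const,
    nsmul_eq_mul]
  rcases s.eq_empty_or_nonempty with rfl | hs
  · simp
  · field_simp [hs.card_pos.ne']

noncomputable def softmax (t : ι → ℝ) (l : ℝ) (i : ι) : ℝ := exp (l * t i) / ∑ j, exp (l * t j)

noncomputable def expMoment (t : ι → ℝ) (m : ℕ) (l : ℝ) : ℝ := ∑ i, t i ^ m * exp (l * t i)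

lemma expMoment_zero (t : ι → ℝ) (l : ℝ) : expMoment t 0 l = ∑ i, exp (l * t i) := by
  simp [expMoment]

lemma expMoment_zero_pos [Nonempty ι] (t : ι → ℝ) (l : ℝ) : 0 < expMoment t 0 l := by
  rw [expMoment_zero]
  exact sum_pos (fun i _ => exp_pos _) univ_nonempty

lemma hasDerivAt_expMoment (t : ι → ℝ) (m : ℕ) (l : ℝ) :
    HasDerivAt (expMoment t m) (expMoment t (m + 1) l) l := by
  unfold expMoment
  refine HasDerivAt.fun_sum fun i _ => ?_
  exact (((hasDerivAt_mul_const (t i)).exp).const_mul (t i ^ m)).congr_deriv (by ring)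

lemma sq_sum_mul_lt_sum_mul_sum_mul_sq {w t : ι → ℝ} (hw : ∀ i, 0 < w i)
    (ht : ∃ i j, t i ≠ t j) :
    (∑ i, t i * w i) ^ 2 < (∑ i, w i) * ∑ i, t i ^ 2 * w i := by
  obtain ⟨i₀, j₀, hij⟩ := ht
  set S := ∑ i, w i
  set T := ∑ i, t i * w i
  have hS : 0 < S := sum_pos (fun i _ => hw i) ⟨i₀, mem_univ _⟩
  have hdev : ∃ i, S * t i - T ≠ 0 := by
    by_contra! h
    exact hij (mul_left_cancel₀ hS.ne' (by linarith [h i₀, h j₀]))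
  obtain ⟨i₁, hi₁⟩ := hdev
  have hpos : 0 < ∑ i, w i * (S * t i - T) ^ 2 :=
    sum_pos' (fun i _ => by have := hw i; positivity)
      ⟨i₁, mem_univ _, mul_pos (hw i₁) (by positivity)⟩
  have hexpand : ∑ i, w i * (S * t i - T) ^ 2 = S * (S * ∑ i, t i ^ 2 * w i - T ^ 2) := by
    have hterm : ∀ i, w i * (S * t i - T) ^ 2
        = S ^ 2 * (t i ^ 2 * w i) - 2 * S * T * (t i * w i) + T ^ 2 * w i := fun i => by ring
    simp only [hterm, sum_add_distrib, sum_sub_distrib, ← mul_sum]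
    ring
  exact sub_pos.1 (pos_of_mul_pos_right (hexpand ▸ hpos) hS.le)

lemma shannonEntropy_softmax [Nonempty ι] (t : ι → ℝ) (l : ℝ) :
    shannonEntropy (softmax t l) =
      log (expMoment t 0 l) - l * expMoment t 1 l / expMoment t 0 l := by
  have hZ := expMoment_zero_pos t l
  rw [expMoment_zero] at hZ ⊢
  set Z := ∑ j, exp (l * t j)
  have hlog : ∀ i, log (softmax t l i) = l * t i - log Z := fun i => by
    rw [softmax, log_div (exp_ne_zero _) hZ.ne', log_exp]
  calc shannonEntropy (softmax t l)
      = -∑ i, (l * (t i * exp (l * t i)) - log Z * exp (l * t i)) / Z := by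
        unfold shannonEntropy
        simp only [hlog]
        congr 1
        refine sum_congr rfl fun i _ => ?_
        rw [softmax]
        ring
    _ = log Z - l * expMoment t 1 l / Z := by
        rw [← sum_div, sum_sub_distrib, ← mul_sum, ← mul_sum]
        simp only [expMoment, pow_one]
        field_simp
        ring

lemma hasDerivAt_shannonEntropy_softmax [Nonempty ι] (t : ι → ℝ) (l : ℝ) :
    HasDerivAt (fun l => shannonEntropy (softmax t l))
      (-(l * (expMoment t 0 l * expMoment t 2 l - expMoment t 1 l ^ 2) / expMoment t 0 l ^ 2))
      l := by
  simp only [shannonEntropy_softmax]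
  have hZ := (expMoment_zero_pos t l).ne'
  have hlog := (hasDerivAt_expMoment t 0 l).log hZ
  have hquot := ((hasDerivAt_id l).mul (hasDerivAt_expMoment t 1 l)).div
    (hasDerivAt_expMoment t 0 l) hZ
  refine (hlog.sub hquot).congr_deriv ?_
  simp only [id, Pi.mul_apply, zero_add]
  field_simp
  ring

lemma strictAntiOn_shannonEntropy_softmax {t : ι → ℝ} (ht : ∃ i j, t i ≠ t j) :
    StrictAntiOn (fun l => shannonEntropy (softmax t l)) (Set.Ioi 0) := by
  obtain ⟨i₀, -⟩ := id ht
  have : Nonempty ι := ⟨i₀⟩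
  have hderiv := hasDerivAt_shannonEntropy_softmax t
  refine strictAntiOn_of_deriv_neg (convex_Ioi 0)
    (fun l _ => (hderiv l).continuousAt.continuousWithinAt) fun l hl => ?_
  rw [interior_Ioi] at hl
  have hvar : expMoment t 1 l ^ 2 < expMoment t 0 l * expMoment t 2 l := by
    simpa only [expMoment, pow_zero, one_mul, pow_one] using
      sq_sum_mul_lt_sum_mul_sum_mul_sq (fun i => exp_pos (l * t i)) ht
  rw [(hderiv l).deriv, neg_lt_zero]
  exact div_pos (mul_pos hl (sub_pos.2 hvar)) (pow_pos (expMoment_zero_pos t l) 2)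

lemma softmax_sub_const (t : ι → ℝ) (c l : ℝ) : softmax (fun i => t i - c) l = softmax t l := by
  funext i
  simp only [softmax, mul_sub, exp_sub, ← sum_div]
  exact div_div_div_cancel_right₀ (exp_ne_zero _) _ _

lemma tendsto_exp_mul_atTop_of_nonpos {a : ℝ} (ha : a ≤ 0) :
    Tendsto (fun l => exp (l * a)) atTop (𝓝 (if a = 0 then 1 else 0)) := by
  rcases ha.lt_or_eq with ha | rfl
  · rw [if_neg ha.ne]
    exact tendsto_exp_atBot.comp (tendsto_id.atTop_mul_const_of_neg' ha)
  · simp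

lemma tendsto_softmax_atTop [DecidableEq ι] {t : ι → ℝ} {M : ℝ}
    (hM : IsGreatest (Set.range t) M) :
    Tendsto (softmax t) atTop (𝓝 (uniformWeights (univ.filter fun j => t j = M))) := by
  refine tendsto_pi_nhds.2 fun i => ?_
  have hle : ∀ j, t j - M ≤ 0 := fun j => sub_nonpos.2 (hM.2 ⟨j, rfl⟩)
  have hnum := tendsto_exp_mul_atTop_of_nonpos (hle i)
  have hden : Tendsto (fun l => ∑ j, exp (l * (t j - M))) atTop
      (𝓝 ((univ.filter fun j => t j = M).card)) := by
    simpa only [sub_eq_zero, sum_boole] using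
      tendsto_finsetSum univ fun j _ => tendsto_exp_mul_atTop_of_nonpos (hle j)
  obtain ⟨j₀, hj₀⟩ := hM.1
  have hcard : ((univ.filter fun j => t j = M).card : ℝ) ≠ 0 :=
    Nat.cast_ne_zero.2 (card_ne_zero.2 ⟨j₀, mem_filter.2 ⟨mem_univ _, hj₀⟩⟩)
  have hshift : (fun l => softmax t l i) = fun l => softmax (fun j => t j - M) l i := by
    simp only [softmax_sub_const]
  have hlim : (if t i - M = 0 then 1 else 0) / ((univ.filter fun j => t j = M).card : ℝ)
      = uniformWeights (univ.filter fun j => t j = M) i := by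
    simp only [uniformWeights, sub_eq_zero, mem_filter, mem_univ, true_and]
    split_ifs <;> simp
  rw [hshift, ← hlim]
  exact hnum.div hden hcard

lemma tendsto_shannonEntropy_softmax_atTop {t : ι → ℝ} {M : ℝ}
    (hM : IsGreatest (Set.range t) M) :
    Tendsto (fun l => shannonEntropy (softmax t l)) atTop
      (𝓝 (log (univ.filter fun i => t i = M).card)) := by
  classical
  rw [← shannonEntropy_uniformWeights]
  exact (continuous_shannonEntropy.tendsto _).comp (tendsto_softmax_atTop hM)

end

theorem softmax_entropy_strictAnti_and_limit (n : ℕ) (t : Fin n → ℝ)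
    (hne : ∃ i j, t i ≠ t j)
    (M : ℝ) (hM : IsGreatest (Set.range t) M)
    (k : ℕ) (hk : k = (Finset.univ.filter (fun i => t i = M)).card) :
    StrictAntiOn
      (fun l : ℝ =>
        -∑ i, (exp (l * t i) / ∑ j, exp (l * t j)) *
          log (exp (l * t i) / ∑ j, exp (l * t j))) (Set.Ioi (0 : ℝ)) ∧
    Filter.Tendsto
      (fun l : ℝ =>
        -∑ i, (exp (l * t i) / ∑ j, exp (l * t j)) *
          log (exp (l * t i) / ∑ j, exp (l * t j)))
      Filter.atTop (nhds (log k)) := by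
  subst hk
  exact ⟨strictAntiOn_shannonEntropy_softmax hne, tendsto_shannonEntropy_softmax_atTop hM⟩
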